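/- Suppose σ_∃ satisfies Out(σ_∃) ∩ H ⊆ L and σ'_∃ is subgame winning for L. Define W = { h | Out_h(σ'_∃) ⊆ L } and let τ = σ'_∃[H\W → σ_∃] be the strategy that plays σ_∃(h) when h is a prefix of a word of H and h ∉ W, and plays σ'_∃(h) otherwise. Then τ is subgame winning for L and satisfies Out(τ) ∩ H ⊆ L; consequently EA(τ) is an optimal assumption for L containing H. -/
import Mathlib


open scoped Classical

universe u v

variable {I : Type u} {O : Type v}

/-- The finite (even) history consisting of the first `n` (input, output) pairs of a word.
A word in `(Σ_I · Σ_O)^ω` is modelled as `w : ℕ → I × O`, where round `n` consists of the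
input letter `(w n).1` followed by the output letter `(w n).2`. -/
def wpref (w : ℕ → I × O) (n : ℕ) : List (I × O) := (List.range n).map w

/-- Outcomes of a controller strategy `σ : (Σ_I·Σ_O)^*·Σ_I → Σ_O`. -/
def OutC (σ : List (I × O) → I → O) : Set (ℕ → I × O) :=
  {w | ∀ n, (w n).2 = σ (wpref w n) (w n).1}

/-- Outcomes of an environment strategy `τ : (Σ_I·Σ_O)^* → Σ_I`. -/
def OutE (τ : List (I × O) → I) : Set (ℕ → I × O) :=
  {w | ∀ n, (w n).1 = τ (wpref w n)}

/-- Input projection `π_I`. -/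
def inputProj (w : ℕ → I × O) : ℕ → I := fun n => (w n).1

/-- `A` is an input assumption: closed under changing output letters. -/
def IsInputAssumption (A : Set (ℕ → I × O)) : Prop :=
  ∀ w w' : ℕ → I × O, inputProj w = inputProj w' → w ∈ A → w' ∈ A

/-- Cylinder `h·(Σ_I·Σ_O)^ω` of an even history `h`. -/
def cylE (h : List (I × O)) : Set (ℕ → I × O) := {w | wpref w h.length = h}

/-- Cylinder of a general history: an even part plus possibly a pending input letter. -/
def cylH (h : List (I × O) × Option I) : Set (ℕ → I × O) :=
  {w | wpref w h.1.length = h.1 ∧ ∀ i, h.2 = some i → (w h.1.length).1 = i}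

/-- A scenario is coherent: no history is a prefix of two words of `S`
that agree on the next input but disagree on the next output. -/
def Coherent (S : Set (ℕ → I × O)) : Prop :=
  ∀ w ∈ S, ∀ w' ∈ S, ∀ n, wpref w n = wpref w' n → (w n).1 = (w' n).1 → (w n).2 = (w' n).2

/-- The strategy `[S → σ]`: follow a word of the scenario `S` extending the current
history if one exists, and otherwise play `σ`. -/
noncomputable def shiftStrat (S : Set (ℕ → I × O))
    (σ : List (I × O) → I → O) : List (I × O) → I → O := fun h i =>
  if hex : ∃ w, w ∈ S ∧ wpref w h.length = h ∧ (w h.length).1 = i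
  then (hex.choose h.length).2
  else σ h i

/-- `EA(σ) = L ∪ ((Σ_I·Σ_O)^ω \ Out(σ))`. -/
def EA (L : Set (ℕ → I × O)) (σ : List (I × O) → I → O) : Set (ℕ → I × O) :=
  L ∪ (OutC σ)ᶜ

/-- The words doomed for `σ`: some even-length prefix extends to an outcome of `σ`,
but no outcome of `σ` extending that prefix is in `L`. -/
def Doomed (L : Set (ℕ → I × O)) (σ : List (I × O) → I → O) : Set (ℕ → I × O) :=
  {w | ∃ k, (OutC σ ∩ cylE (wpref w k)).Nonempty ∧ OutC σ ∩ cylE (wpref w k) ∩ L = ∅}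

/-- `EA⁻(σ) = EA(σ) \ Doomed(σ)`. -/
def EAminus (L : Set (ℕ → I × O)) (σ : List (I × O) → I → O) : Set (ℕ → I × O) :=
  EA L σ \ Doomed L σ

/-- `A` is sufficient for the specification `L` (for some controller strategy). -/
def Sufficient (L A : Set (ℕ → I × O)) : Prop :=
  ∃ σ : List (I × O) → I → O, OutC σ ∩ A ⊆ L

/-- `A` is output-restrictive. -/
def OutputRestrictive (A : Set (ℕ → I × O)) : Prop :=
  ∃ (h : List (I × O)) (σ : List (I × O) → I → O),
    (A ∩ cylE h).Nonempty ∧ (OutC σ ∩ cylE h).Nonempty ∧ A ∩ OutC σ ∩ cylE h = ∅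

/-- The even history of length `n` produced jointly by controller `σ` and environment `τ`. -/
def playH (σ : List (I × O) → I → O) (τ : List (I × O) → I) : ℕ → List (I × O)
  | 0 => []
  | n+1 =>
      let g := playH σ τ n
      g ++ [(τ g, σ g (τ g))]

/-- The unique joint outcome `Out(σ, τ)`. -/
def play (σ : List (I × O) → I → O) (τ : List (I × O) → I) : ℕ → I × O := fun n =>
  let g := playH σ τ n
  (τ g, σ g (τ g))

/-- History construction when the controller follows `σ` against the fixed input word `u`. -/
def playIH (σ : List (I × O) → I → O) (u : ℕ → I) : ℕ → List (I × O)
  | 0 => []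
  | n+1 =>
      let g := playIH σ u n
      g ++ [(u n, σ g (u n))]

/-- The unique outcome `Out(σ, u)` of `σ` against the input word `u`. -/
def playI (σ : List (I × O) → I → O) (u : ℕ → I) : ℕ → I × O := fun n =>
  (u n, σ (playIH σ u n) (u n))

/-- Outcomes extending the history `h` and following `σ` afterwards, `Out_h(σ)`. -/
def OutFrom (σ : List (I × O) → I → O) (h : List (I × O) × Option I) :
    Set (ℕ → I × O) :=
  {w | wpref w h.1.length = h.1 ∧ (∀ i, h.2 = some i → (w h.1.length).1 = i) ∧
       ∀ n, h.1.length ≤ n → (w n).2 = σ (wpref w n) (w n).1}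

/-- Even histories extending the finite history `b`, following `σ` and `τ`. -/
def extH (σ : List (I × O) → I → O) (τ : List (I × O) → I)
    (b : List (I × O)) : ℕ → List (I × O)
  | 0 => b
  | n+1 =>
      let g := extH σ τ b n
      g ++ [(τ g, σ g (τ g))]

/-- The unique word extending `b` and following `σ` and `τ` afterwards. -/
def extPlay (σ : List (I × O) → I → O) (τ : List (I × O) → I)
    (b : List (I × O)) : ℕ → I × O := fun n =>
  if hn : n < b.length then b.get ⟨n, hn⟩
  else
    let g := extH σ τ b (n - b.length)
    (τ g, σ g (τ g))

/-- The even history obtained from the general history `h`, letting `σ` answer a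
pending input letter if there is one. -/
def histBase (σ : List (I × O) → I → O) (h : List (I × O) × Option I) :
    List (I × O) :=
  match h.2 with
  | none => h.1
  | some i => h.1 ++ [(i, σ h.1 i)]

/-- `Out_h(σ, τ)`: the unique word extending `h`, following `σ` and `τ` afterwards. -/
def playFrom (σ : List (I × O) → I → O) (τ : List (I × O) → I)
    (h : List (I × O) × Option I) : ℕ → I × O :=
  extPlay σ τ (histBase σ h)

/-- `σ` is strongly winning for `L`. -/
def StronglyWinning (L : Set (ℕ → I × O)) (σ : List (I × O) → I → O) : Prop :=
  ∀ h : List (I × O) × Option I,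
    (∃ σ' : List (I × O) → I → O, (OutC σ' ∩ cylH h).Nonempty ∧ OutC σ' ∩ cylH h ⊆ L) →
    OutC σ ∩ cylH h ⊆ L

/-- `σ` is subgame winning for `L`. -/
def SubgameWinning (L : Set (ℕ → I × O)) (σ : List (I × O) → I → O) : Prop :=
  ∀ h : List (I × O) × Option I,
    (∃ σ' : List (I × O) → I → O, OutFrom σ' h ⊆ L) → OutFrom σ h ⊆ L

/-- The strategy `σ'[H\W → σ]`: at a history ending with input letter `i`,
play `σ` if the history is a prefix of a word of `H` and is not in
`W = {h | Out_h(σ') ⊆ L}`; otherwise play `σ'`. -/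
noncomputable def genStrat (L H : Set (ℕ → I × O))
    (σ σ' : List (I × O) → I → O) : List (I × O) → I → O := fun h i =>
  if (∃ w ∈ H, wpref w h.length = h ∧ (w h.length).1 = i) ∧
      ¬ OutFrom σ' (h, some i) ⊆ L
  then σ h i else σ' h i

section myAux

lemma wpref_length (w : ℕ → I × O) (n : ℕ) : (wpref w n).length = n := by simp [wpref]

lemma wpref_succ (w : ℕ → I × O) (n : ℕ) : wpref w (n+1) = wpref w n ++ [w n] := by
  simp [wpref, List.range_succ]

lemma wpref_eq_iff (w v : ℕ → I × O) (n : ℕ) :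
    wpref w n = wpref v n ↔ ∀ m < n, w m = v m := by
  simp [wpref, List.map_eq_map_iff]

lemma wpref_mono {w v : ℕ → I × O} {n : ℕ} (h : wpref w n = wpref v n) {m : ℕ} (hm : m ≤ n) :
    wpref w m = wpref v m := by
  rw [wpref_eq_iff] at h ⊢
  exact fun k hk => h k (lt_of_lt_of_le hk hm)

/-- Membership in `OutFrom` at a history cut from `w` itself. -/
lemma mem_OutFrom_of (σ : List (I × O) → I → O) (w : ℕ → I × O) (n : ℕ)
    (hf : ∀ m, n ≤ m → (w m).2 = σ (wpref w m) (w m).1) :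
    w ∈ OutFrom σ (wpref w n, some (w n).1) := by
  refine ⟨by rw [wpref_length], ?_, ?_⟩
  · intro i hi
    rw [wpref_length]
    exact Option.some.inj hi
  · intro m hm
    rw [wpref_length] at hm
    exact hf m hm

/-- Extending a history with a `σ'`-move keeps us inside the earlier `OutFrom`. -/
lemma outFrom_step (σ' : List (I × O) → I → O) (g : List (I × O)) (i j : I) :
    OutFrom σ' (g ++ [(i, σ' g i)], some j) ⊆ OutFrom σ' (g, some i) := by
  rintro v ⟨h1, h2, h3⟩
  simp only [List.length_append, List.length_singleton] at h1 h3
  rw [wpref_succ] at h1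
  have hlen : (wpref v g.length).length = g.length := wpref_length v g.length
  obtain ⟨e1, e2⟩ := List.append_inj h1 (by rw [hlen])
  have e2' : v g.length = (i, σ' g i) := by
    simpa using e2
  refine ⟨e1, ?_, ?_⟩
  · intro i' hi'
    rw [e2', Option.some.inj hi']
  · intro m hm
    rcases eq_or_lt_of_le hm with rfl | hm'
    · rw [e2', e1]
    · exact h3 m hm'

/-- Core induction: if a strategy `τ` agrees with `σ'` whenever `σ'` wins from the pending
history, and `w` follows `τ` from `n` on, and `σ'` wins from `w`'s history at `n`,
then `w ∈ L`. -/
lemma follow_from (L : Set (ℕ → I × O)) (σ' τ : List (I × O) → I → O)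
    (hτ : ∀ g i, OutFrom σ' (g, some i) ⊆ L → τ g i = σ' g i)
    (w : ℕ → I × O) (n : ℕ)
    (hw : ∀ m, n ≤ m → (w m).2 = τ (wpref w m) (w m).1)
    (hC : OutFrom σ' (wpref w n, some (w n).1) ⊆ L) : w ∈ L := by
  have key : ∀ m, OutFrom σ' (wpref w (n+m), some (w (n+m)).1) ⊆ L := by
    intro m
    induction m with
    | zero => simpa using hC
    | succ m ih =>
      have hstep : (w (n+m)).2 = σ' (wpref w (n+m)) (w (n+m)).1 := by
        rw [hw (n+m) (Nat.le_add_right _ _), hτ _ _ ih]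
      have hp : wpref w (n+m+1)
          = wpref w (n+m) ++ [((w (n+m)).1, σ' (wpref w (n+m)) (w (n+m)).1)] := by
        rw [wpref_succ]
        congr 1
        rw [← hstep]
      rw [show n + (m+1) = (n+m)+1 from rfl, hp]
      exact (outFrom_step σ' (wpref w (n+m)) (w (n+m)).1 (w ((n+m)+1)).1).trans ih
  have hfollow : ∀ m, n ≤ m → (w m).2 = σ' (wpref w m) (w m).1 := by
    intro m hm
    obtain ⟨k, rfl⟩ := Nat.exists_eq_add_of_le hm
    rw [hw (n+k) (Nat.le_add_right _ _), hτ _ _ (key k)]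
  exact hC (mem_OutFrom_of σ' w n hfollow)

lemma playIH_eq (σ : List (I × O) → I → O) (u : ℕ → I) (n : ℕ) :
    playIH σ u n = wpref (playI σ u) n := by
  induction n with
  | zero => simp [playIH, wpref]
  | succ n ih =>
    rw [wpref_succ, playIH, ← ih]
    rfl

lemma playI_mem (σ : List (I × O) → I → O) (u : ℕ → I) : playI σ u ∈ OutC σ := by
  intro n
  show (playI σ u n).2 = σ (wpref (playI σ u) n) (playI σ u n).1
  rw [← playIH_eq]
  rfl

/-- `genStrat` plays `σ'` whenever `σ'` wins from the pending history. -/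
lemma genStrat_eq_of_win (L H : Set (ℕ → I × O)) (σ σ' : List (I × O) → I → O)
    (g : List (I × O)) (i : I) (h : OutFrom σ' (g, some i) ⊆ L) :
    genStrat L H σ σ' g i = σ' g i := by
  unfold genStrat
  rw [if_neg]
  tauto

end myAux

/-- if `Out(σ) ∩ H ⊆ L` and `σ'` is subgame winning for `L`, then
`τ = σ'[H\W → σ]` is subgame winning, satisfies `Out(τ) ∩ H ⊆ L`, and `EA(τ)` is an
optimal assumption for `L` containing `H`. -/
theorem generalisation_of_assumption
    (L H : Set (ℕ → I × O)) (σ σ' : List (I × O) → I → O)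
    (hσ : OutC σ ∩ H ⊆ L) (hsg : SubgameWinning L σ') :
    SubgameWinning L (genStrat L H σ σ') ∧
    OutC (genStrat L H σ σ') ∩ H ⊆ L ∧
    (Sufficient L (EA L (genStrat L H σ σ')) ∧
      ∀ B : Set (ℕ → I × O), Sufficient L B → ¬ EA L (genStrat L H σ σ') ⊂ B) ∧
    H ⊆ EA L (genStrat L H σ σ') := by
  set τ := genStrat L H σ σ' with hτdef
  have hτ : ∀ g i, OutFrom σ' (g, some i) ⊆ L → τ g i = σ' g i :=
    fun g i h => genStrat_eq_of_win L H σ σ' g i h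
  -- Part 1: τ is subgame winning
  have part1 : SubgameWinning L τ := by
    intro h hex w hw
    have hσ'h : OutFrom σ' h ⊆ L := hsg h hex
    obtain ⟨hw1, hw2, hw3⟩ := hw
    have hC : OutFrom σ' (wpref w h.1.length, some (w h.1.length).1) ⊆ L := by
      intro v hv
      obtain ⟨hv1, hv2, hv3⟩ := hv
      rw [wpref_length] at hv1 hv2 hv3
      apply hσ'h
      refine ⟨by rw [hv1, hw1], ?_, ?_⟩
      · intro i hi
        rw [hv2 (w h.1.length).1 rfl]
        exact hw2 i hi
      · exact hv3
    exact follow_from L σ' τ hτ w h.1.length hw3 hC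
  -- Part 2: OutC τ ∩ H ⊆ L
  have part2 : OutC τ ∩ H ⊆ L := by
    rintro w ⟨hwτ, hwH⟩
    by_cases hex : ∃ n, OutFrom σ' (wpref w n, some (w n).1) ⊆ L
    · obtain ⟨n, hn⟩ := hex
      exact follow_from L σ' τ hτ w n (fun m _ => hwτ m) hn
    · push_neg at hex
      refine hσ ⟨?_, hwH⟩
      intro n
      have h1 := hwτ n
      rw [hτdef] at h1
      unfold genStrat at h1
      rw [if_pos ⟨⟨w, hwH, by rw [wpref_length], by rw [wpref_length]⟩, hex n⟩] at h1
      exact h1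
  refine ⟨part1, part2, ⟨⟨τ, ?_⟩, ?_⟩, ?_⟩
  -- Sufficiency of EA L τ
  · rintro w ⟨h1, h2⟩
    rcases h2 with h2 | h2
    · exact h2
    · exact absurd h1 h2
  -- Optimality
  · rintro B ⟨σB, hB⟩ hss
    have hsub : EA L τ ⊆ B := hss.1
    obtain ⟨w, hwB, hwEA⟩ := Set.exists_of_ssubset hss
    have hwL : w ∉ L := fun h => hwEA (Or.inl h)
    have hwτ : w ∈ OutC τ := by
      by_contra h
      exact hwEA (Or.inr h)
    set w' := playI σB (inputProj w) with hw'def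
    have hw'O : w' ∈ OutC σB := playI_mem σB (inputProj w)
    have hinp : ∀ n, (w' n).1 = (w n).1 := fun n => rfl
    by_cases heq : ∀ n, w' n = w n
    · have : w' = w := funext heq
      rw [this] at hw'O
      exact hwL (hB ⟨hw'O, hwB⟩)
    · push_neg at heq
      have hfind : ∃ n, w' n ≠ w n := heq
      set n := Nat.find hfind with hndef
      have hn : w' n ≠ w n := Nat.find_spec hfind
      have hmin : ∀ m < n, w' m = w m := fun m hm => not_not.mp (Nat.find_min hfind hm)
      have hpref : wpref w' n = wpref w n := (wpref_eq_iff w' w n).mpr hmin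
      have hout_ne : σB (wpref w n) (w n).1 ≠ (w n).2 := by
        intro hcontra
        apply hn
        have h2 : (w' n).2 = (w n).2 := by
          rw [hw'O n, hpref, hinp n, hcontra]
        exact Prod.ext (hinp n) h2
      have hτval : τ (wpref w n) (w n).1 = (w n).2 := (hwτ n).symm
      have hOFw : w ∈ OutFrom τ (wpref w n, some (w n).1) :=
        mem_OutFrom_of τ w n (fun m _ => hwτ m)
      have hnot : ¬ OutFrom σB (wpref w n, some (w n).1) ⊆ L := by
        intro hcon
        exact hwL (part1 (wpref w n, some (w n).1) ⟨σB, hcon⟩ hOFw)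
      obtain ⟨w'', hw''OF, hw''L⟩ := Set.not_subset.mp hnot
      obtain ⟨h1, h2, h3⟩ := hw''OF
      rw [wpref_length] at h1 h2 h3
      have hi : (w'' n).1 = (w n).1 := h2 (w n).1 rfl
      have hw''O : w'' ∈ OutC σB := by
        intro m
        rcases lt_or_ge m n with hm | hm
        · have e1 : w'' m = w m := (wpref_eq_iff w'' w n).mp h1 m hm
          have e2 : wpref w'' m = wpref w' m :=
            wpref_mono (h1.trans hpref.symm) (le_of_lt hm)
          have e3 : w'' m = w' m := e1.trans (hmin m hm).symm
          rw [e3, e2]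
          exact hw'O m
        · exact h3 m hm
      have hw''τ : w'' ∉ OutC τ := by
        intro hcc
        apply hout_ne
        have hx := hcc n
        rw [h1, hi, hτval] at hx
        have hy := h3 n le_rfl
        rw [h1, hi] at hy
        rw [← hy, hx]
      exact hw''L (hB ⟨hw''O, hsub (Or.inr hw''τ)⟩)
  -- H ⊆ EA L τ
  · intro w hwH
    by_cases h : w ∈ OutC τ
    · exact Or.inl (part2 ⟨h, hwH⟩)
    · exact Or.inr h
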